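/- Let H be a Hopf coquasigroup and (M,ρ^M) a right H-quasicomodule. Then H⊗M with action h·(k⊗m) = hk⊗m and coaction k⊗m ↦ k⊗m⁽⁰⁾⊗m⁽¹⁾ is a Long H-dimodule, and the functor M ↦ H⊗M from right H-quasicomodules to Long H-dimodules is left adjoint to the forgetful functor, with unit η_N = 1⊗id and counit σ_M = ρ_M. -/

import Mathlib

open TensorProduct

/-- A Hopf coquasigroup over a field `k`: an associative unital algebra and counital (not
necessarily coassociative) coalgebra, with `comul` and `counit` algebra maps, together
with an antipode satisfying `S(h₁)h₂₍₁₎ ⊗ h₂₍₂₎ = h₁S(h₂₍₁₎) ⊗ h₂₍₂₎ = 1 ⊗ h` and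
`h₁₍₁₎ ⊗ h₁₍₂₎S(h₂) = h₁₍₁₎ ⊗ S(h₁₍₂₎)h₂ = h ⊗ 1`. -/
structure HopfCoquasigroup (k : Type*) [Field k] (H : Type*) [AddCommMonoid H]
    [Module k H] where
  mul : H →ₗ[k] H →ₗ[k] H
  one : H
  comul : H →ₗ[k] H ⊗[k] H
  counit : H →ₗ[k] k
  antipode : H →ₗ[k] H
  one_mul : ∀ h, mul one h = h
  mul_one : ∀ h, mul h one = h
  mul_assoc : ∀ a b c, mul (mul a b) c = mul a (mul b c)
  counit_comul : ∀ h, (TensorProduct.lid k H) ((counit.rTensor H) (comul h)) = h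
  comul_counit : ∀ h, (TensorProduct.rid k H) ((LinearMap.lTensor H counit) (comul h)) = h
  counit_one : counit one = 1
  counit_mul : ∀ a b, counit (mul a b) = counit a * counit b
  comul_one : comul one = one ⊗ₜ[k] one
  comul_mul : ∀ a b, comul (mul a b)
      = (TensorProduct.map (TensorProduct.lift mul) (TensorProduct.lift mul))
          ((TensorProduct.tensorTensorTensorComm k H H H H) ((comul a) ⊗ₜ[k] (comul b)))
  -- `S(h₁)h₂₍₁₎ ⊗ h₂₍₂₎ = 1 ⊗ h`
  coq1a : ∀ h, ((TensorProduct.lift (mul.comp antipode)).rTensor H)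
      ((TensorProduct.assoc k H H H).symm ((LinearMap.lTensor H comul) (comul h)))
      = one ⊗ₜ[k] h
  -- `h₁S(h₂₍₁₎) ⊗ h₂₍₂₎ = 1 ⊗ h`
  coq1b : ∀ h, ((TensorProduct.lift (mul.compl₂ antipode)).rTensor H)
      ((TensorProduct.assoc k H H H).symm ((LinearMap.lTensor H comul) (comul h)))
      = one ⊗ₜ[k] h
  -- `h₁₍₁₎ ⊗ h₁₍₂₎S(h₂) = h ⊗ 1`
  coq2a : ∀ h, (LinearMap.lTensor H (TensorProduct.lift (mul.compl₂ antipode)))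
      ((TensorProduct.assoc k H H H) ((comul.rTensor H) (comul h)))
      = h ⊗ₜ[k] one
  -- `h₁₍₁₎ ⊗ S(h₁₍₂₎)h₂ = h ⊗ 1`
  coq2b : ∀ h, (LinearMap.lTensor H (TensorProduct.lift (mul.comp antipode)))
      ((TensorProduct.assoc k H H H) ((comul.rTensor H) (comul h)))
      = h ⊗ₜ[k] one

variable {k H : Type*} [Field k] [AddCommMonoid H] [Module k H]

/-- A right quasicomodule over a Hopf coquasigroup: `m⁽⁰⁾ε(m⁽¹⁾) = m` and
`m⁽⁰⁾⁽⁰⁾ ⊗ m⁽⁰⁾⁽¹⁾S(m⁽¹⁾) = m ⊗ 1 = m⁽⁰⁾⁽⁰⁾ ⊗ S(m⁽⁰⁾⁽¹⁾)m⁽¹⁾`. -/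
structure RightQuasicomodule (hc : HopfCoquasigroup k H) (M : Type*)
    [AddCommMonoid M] [Module k M] where
  coact : M →ₗ[k] M ⊗[k] H
  coact_counit : ∀ m, (TensorProduct.rid k M) ((LinearMap.lTensor M hc.counit) (coact m)) = m
  -- `m⁽⁰⁾⁽⁰⁾ ⊗ m⁽⁰⁾⁽¹⁾S(m⁽¹⁾) = m ⊗ 1`
  coact_quasi1 : ∀ m, (LinearMap.lTensor M (TensorProduct.lift (hc.mul.compl₂ hc.antipode)))
      ((TensorProduct.assoc k M H H) ((coact.rTensor H) (coact m))) = m ⊗ₜ[k] hc.one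
  -- `m⁽⁰⁾⁽⁰⁾ ⊗ S(m⁽⁰⁾⁽¹⁾)m⁽¹⁾ = m ⊗ 1`
  coact_quasi2 : ∀ m, (LinearMap.lTensor M (TensorProduct.lift (hc.mul.comp hc.antipode)))
      ((TensorProduct.assoc k M H H) ((coact.rTensor H) (coact m))) = m ⊗ₜ[k] hc.one

/-- A unital associative left module over a Hopf coquasigroup. -/
structure LeftModule (hc : HopfCoquasigroup k H) (M : Type*)
    [AddCommMonoid M] [Module k M] where
  act : H →ₗ[k] M →ₗ[k] M
  act_one : ∀ m, act hc.one m = m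
  act_mul : ∀ g h m, act (hc.mul g h) m = act g (act h m)

/-- A Long dimodule over a Hopf coquasigroup: a unital associative left module and a
right quasicomodule with `(h·m)⁽⁰⁾ ⊗ (h·m)⁽¹⁾ = h·m⁽⁰⁾ ⊗ m⁽¹⁾`. -/
structure LongDimoduleCoq (hc : HopfCoquasigroup k H) (M : Type*)
    [AddCommMonoid M] [Module k M] extends LeftModule hc M, RightQuasicomodule hc M where
  compat : ∀ h m, coact (act h m) = ((act h).rTensor H) (coact m)


/-- A morphism of right quasicomodules: an `H`-colinear map. -/
def IsQuasicomoduleHom {hc : HopfCoquasigroup k H} {M N : Type*}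
    [AddCommMonoid M] [Module k M] [AddCommMonoid N] [Module k N]
    (cm : RightQuasicomodule hc M) (cn : RightQuasicomodule hc N) (g : M →ₗ[k] N) :
    Prop :=
  ∀ m : M, cn.coact (g m) = (g.rTensor H) (cm.coact m)

/-- A morphism of Long dimodules over a Hopf coquasigroup: an `H`-linear `H`-colinear
map. -/
def IsLongDimoduleCoqHom {hc : HopfCoquasigroup k H} {M N : Type*}
    [AddCommMonoid M] [Module k M] [AddCommMonoid N] [Module k N]
    (ld : LongDimoduleCoq hc M) (ln : LongDimoduleCoq hc N) (f : M →ₗ[k] N) : Prop :=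
  (∀ (h : H) (m : M), f (ld.act h m) = ln.act h (f m)) ∧
  (∀ m : M, ln.coact (f m) = (f.rTensor H) (ld.coact m))

/-- `Phi h : N⊗H → (H⊗N)⊗H`, `n⊗a ↦ (h⊗n)⊗a`. -/
noncomputable def Phi (k : Type*) [Field k] (H N : Type*) [AddCommMonoid H] [Module k H]
    [AddCommMonoid N] [Module k N] (h : H) : N ⊗[k] H →ₗ[k] (H ⊗[k] N) ⊗[k] H :=
  ((TensorProduct.assoc k H N H).symm.toLinearMap).comp ((TensorProduct.mk k H (N ⊗[k] H)) h)

section aux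
variable {N M : Type*} [AddCommMonoid N] [Module k N] [AddCommMonoid M] [Module k M]

@[simp] lemma Phi_tmul (h : H) (n : N) (a : H) :
    Phi k H N h (n ⊗ₜ[k] a) = (h ⊗ₜ[k] n) ⊗ₜ[k] a := rfl

lemma phi_e1 (ρ : N →ₗ[k] N ⊗[k] H) (h : H) :
    (((TensorProduct.assoc k H N H).symm.toLinearMap).comp
        (LinearMap.lTensor H ρ)).rTensor H ∘ₗ Phi k H N h
      = (Phi k H N h).rTensor H ∘ₗ ρ.rTensor H := by
  ext n a
  simp [Phi]

lemma phi_e2 (F : H ⊗[k] H →ₗ[k] H) (h : H) :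
    LinearMap.lTensor (H ⊗[k] N) F ∘ₗ (TensorProduct.assoc k (H ⊗[k] N) H H).toLinearMap
        ∘ₗ (Phi k H N h).rTensor H
      = Phi k H N h ∘ₗ LinearMap.lTensor N F ∘ₗ (TensorProduct.assoc k N H H).toLinearMap := by
  ext n a b
  simp [Phi]

lemma phi_e3 (ε : H →ₗ[k] k) (h : H) :
    (TensorProduct.rid k (H ⊗[k] N)).toLinearMap ∘ₗ LinearMap.lTensor (H ⊗[k] N) ε
        ∘ₗ Phi k H N h
      = (TensorProduct.mk k H N h) ∘ₗ (TensorProduct.rid k N).toLinearMap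
          ∘ₗ LinearMap.lTensor N ε := by
  ext n a
  simp [Phi, TensorProduct.tmul_smul, TensorProduct.smul_tmul']

lemma phi_e4 (f : H ⊗[k] N →ₗ[k] M) (h : H) :
    f.rTensor H ∘ₗ Phi k H N h = (f ∘ₗ (TensorProduct.mk k H N) h).rTensor H := by
  ext n a
  simp [Phi]

/-- The key computation for the quasicomodule axioms on `H ⊗ N`. -/
lemma quasiKey (ρ : N →ₗ[k] N ⊗[k] H) (F : H ⊗[k] H →ₗ[k] H) (e : H)
    (hq : ∀ n, (LinearMap.lTensor N F)
        ((TensorProduct.assoc k N H H) ((ρ.rTensor H) (ρ n))) = n ⊗ₜ[k] e)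
    (x : H ⊗[k] N) :
    (LinearMap.lTensor (H ⊗[k] N) F)
      ((TensorProduct.assoc k (H ⊗[k] N) H H)
        (((((TensorProduct.assoc k H N H).symm.toLinearMap).comp
              (LinearMap.lTensor H ρ)).rTensor H)
          ((((TensorProduct.assoc k H N H).symm.toLinearMap).comp
              (LinearMap.lTensor H ρ)) x)))
      = x ⊗ₜ[k] e := by
  set ρt := (((TensorProduct.assoc k H N H).symm.toLinearMap).comp
      (LinearMap.lTensor H ρ)) with hρt
  suffices hs : LinearMap.lTensor (H ⊗[k] N) F
      ∘ₗ (TensorProduct.assoc k (H ⊗[k] N) H H).toLinearMap ∘ₗ ρt.rTensor H ∘ₗ ρt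
      = (TensorProduct.mk k (H ⊗[k] N) H).flip e by
    exact LinearMap.congr_fun hs x
  ext h n
  have h1 : ρt (h ⊗ₜ[k] n) = Phi k H N h (ρ n) := by simp [hρt, Phi]
  have h2 := LinearMap.congr_fun (phi_e1 (k := k) ρ h) (ρ n)
  have h3 := LinearMap.congr_fun (phi_e2 (N := N) F h) ((ρ.rTensor H) (ρ n))
  simp only [AlgebraTensorModule.curry_apply, TensorProduct.curry_apply,
    LinearMap.coe_restrictScalars, LinearMap.comp_apply, LinearEquiv.coe_coe] at h2 h3 ⊢
  rw [h1, h2, h3, hq n]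
  simp

lemma phi_mk {N : Type*} [AddCommMonoid N] [Module k N] (h : H) :
    Phi k H N h = ((TensorProduct.mk k H N) h).rTensor H := by
  ext n a; simp [Phi]

/-- The Long dimodule structure on `H ⊗ N` induced by a right quasicomodule `N`. -/
noncomputable def tensorLong {hc : HopfCoquasigroup k H} {N : Type*} [AddCommMonoid N]
    [Module k N] (cm : RightQuasicomodule hc N) : LongDimoduleCoq hc (H ⊗[k] N) where
  act := (LinearMap.rTensorHom N).comp hc.mul
  act_one := fun m => by
    have h1 : hc.mul hc.one = LinearMap.id := LinearMap.ext hc.one_mul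
    simp [h1]
  act_mul := fun g h m => by
    have h1 : hc.mul (hc.mul g h) = (hc.mul g).comp (hc.mul h) :=
      LinearMap.ext (hc.mul_assoc g h)
    simp [h1, LinearMap.rTensor_comp]
  coact := ((TensorProduct.assoc k H N H).symm.toLinearMap).comp (LinearMap.lTensor H cm.coact)
  coact_counit := fun m => by
    have hs : (TensorProduct.rid k (H ⊗[k] N)).toLinearMap
        ∘ₗ LinearMap.lTensor (H ⊗[k] N) hc.counit
        ∘ₗ (((TensorProduct.assoc k H N H).symm.toLinearMap).comp
            (LinearMap.lTensor H cm.coact))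
        = LinearMap.id := by
      ext h n
      have h1 := LinearMap.congr_fun (phi_e3 (N := N) hc.counit h) (cm.coact n)
      have h2 : ((TensorProduct.assoc k H N H).symm.toLinearMap).comp
          (LinearMap.lTensor H cm.coact) (h ⊗ₜ[k] n) = Phi k H N h (cm.coact n) := by
        simp [Phi]
      simp only [AlgebraTensorModule.curry_apply, TensorProduct.curry_apply,
        LinearMap.coe_restrictScalars, LinearMap.comp_apply, LinearEquiv.coe_coe,
        LinearMap.id_coe, id_eq] at h1 h2 ⊢
      rw [h2, h1]
      have h3 := cm.coact_counit n
      rw [h3]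
      simp
    exact LinearMap.congr_fun hs m
  coact_quasi1 := fun m =>
    quasiKey cm.coact (TensorProduct.lift (hc.mul.compl₂ hc.antipode)) hc.one
      (fun n => cm.coact_quasi1 n) m
  coact_quasi2 := fun m =>
    quasiKey cm.coact (TensorProduct.lift (hc.mul.comp hc.antipode)) hc.one
      (fun n => cm.coact_quasi2 n) m
  compat := fun h m => by
    set ρt := ((TensorProduct.assoc k H N H).symm.toLinearMap).comp
        (LinearMap.lTensor H cm.coact) with hρt
    have hs : ρt ∘ₗ (hc.mul h).rTensor N
        = (((hc.mul h).rTensor N).rTensor H) ∘ₗ ρt := by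
      ext g n
      have l1 : ∀ (c : H), ρt (c ⊗ₜ[k] n) = Phi k H N c (cm.coact n) := fun c => by
        simp [hρt, Phi]
      have h4 := LinearMap.congr_fun (phi_e4 ((hc.mul h).rTensor N) g) (cm.coact n)
      have h5 : ((hc.mul h).rTensor N) ∘ₗ (TensorProduct.mk k H N) g
          = (TensorProduct.mk k H N) (hc.mul h g) := by
        ext n'; simp
      simp only [AlgebraTensorModule.curry_apply, TensorProduct.curry_apply,
        LinearMap.coe_restrictScalars, LinearMap.comp_apply, LinearEquiv.coe_coe] at h4 ⊢
      rw [show ((hc.mul h).rTensor N) (g ⊗ₜ[k] n) = (hc.mul h g) ⊗ₜ[k] n from by simp,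
        l1, l1, h4, h5, phi_mk]
    exact LinearMap.congr_fun hs m
end aux
/-- For a right quasicomodule `M` over a Hopf coquasigroup `H`, the space `H ⊗ M` with
the action `h·(k⊗m) = hk ⊗ m` and coaction `k⊗m ↦ k ⊗ m⁽⁰⁾ ⊗ m⁽¹⁾` is a Long dimodule;
moreover `M ↦ H ⊗ M` is left adjoint to the forgetful functor from Long dimodules to
right quasicomodules, with unit `η_N = 1 ⊗ id` and counit `σ_M = ρ_M`: the assignments
`f ↦ f ∘ η_N` and `g ↦ σ_M ∘ (id ⊗ g)` are mutually inverse bijections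
`Hom_Long(H ⊗ N, M) ≅ Hom_QComod(N, M)`. -/
theorem coq_tensor_left_adjoint {hc : HopfCoquasigroup k H} {M N : Type*}
    [AddCommMonoid M] [Module k M] [AddCommMonoid N] [Module k N]
    (cm : RightQuasicomodule hc N) (ldM : LongDimoduleCoq hc M) :
    (∃ ld : LongDimoduleCoq hc (H ⊗[k] N),
      ld.act = (LinearMap.rTensorHom N).comp hc.mul ∧
      ld.coact = ((TensorProduct.assoc k H N H).symm.toLinearMap).comp
        (LinearMap.lTensor H cm.coact)) ∧
    (∀ ldHN : LongDimoduleCoq hc (H ⊗[k] N),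
      ldHN.act = (LinearMap.rTensorHom N).comp hc.mul →
      ldHN.coact = ((TensorProduct.assoc k H N H).symm.toLinearMap).comp
          (LinearMap.lTensor H cm.coact) →
      -- the unit `η_N = 1 ⊗ id` is a morphism of quasicomodules
      (IsQuasicomoduleHom cm ldHN.toRightQuasicomodule ((TensorProduct.mk k H N) hc.one)) ∧
      -- the counit `σ_M = ρ_M` is a morphism of Long dimodules
      (∀ ldHM : LongDimoduleCoq hc (H ⊗[k] M),
        ldHM.act = (LinearMap.rTensorHom M).comp hc.mul →
        ldHM.coact = ((TensorProduct.assoc k H M H).symm.toLinearMap).comp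
            (LinearMap.lTensor H ldM.coact) →
        IsLongDimoduleCoqHom ldHM ldM (TensorProduct.lift ldM.act)) ∧
      -- `f ↦ f ∘ η_N` sends Long dimodule morphisms to quasicomodule morphisms
      (∀ f : H ⊗[k] N →ₗ[k] M, IsLongDimoduleCoqHom ldHN ldM f →
        IsQuasicomoduleHom cm ldM.toRightQuasicomodule
          (f.comp ((TensorProduct.mk k H N) hc.one))) ∧
      -- `g ↦ σ_M ∘ (id ⊗ g)` sends quasicomodule morphisms to Long dimodule morphisms
      (∀ g : N →ₗ[k] M, IsQuasicomoduleHom cm ldM.toRightQuasicomodule g →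
        IsLongDimoduleCoqHom ldHN ldM
          ((TensorProduct.lift ldM.act).comp (LinearMap.lTensor H g))) ∧
      -- the two assignments are mutually inverse
      (∀ f : H ⊗[k] N →ₗ[k] M, IsLongDimoduleCoqHom ldHN ldM f →
        (TensorProduct.lift ldM.act).comp
            (LinearMap.lTensor H (f.comp ((TensorProduct.mk k H N) hc.one))) = f) ∧
      (∀ g : N →ₗ[k] M, IsQuasicomoduleHom cm ldM.toRightQuasicomodule g →
        ((TensorProduct.lift ldM.act).comp (LinearMap.lTensor H g)).comp
            ((TensorProduct.mk k H N) hc.one) = g))  := by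
  refine ⟨⟨tensorLong cm, rfl, rfl⟩, ?_⟩
  intro ldHN hact hcoact
  have l1 : ∀ (c : H) (n : N), ldHN.coact (c ⊗ₜ[k] n) = Phi k H N c (cm.coact n) := by
    intro c n; rw [hcoact]; simp [Phi]
  refine ⟨?_, ?_, ?_, ?_, ?_, ?_⟩
  · -- the unit is a quasicomodule morphism
    intro n
    show ldHN.coact (hc.one ⊗ₜ[k] n) = _
    rw [l1, phi_mk]
  · -- the counit is a Long dimodule morphism
    intro ldHM hactM hcoactM
    have l1M : ∀ (c : H) (m : M), ldHM.coact (c ⊗ₜ[k] m) = Phi k H M c (ldM.coact m) := by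
      intro c m; rw [hcoactM]; simp [Phi]
    constructor
    · intro h x
      rw [hactM]
      have hs : (TensorProduct.lift ldM.act) ∘ₗ (((LinearMap.rTensorHom M).comp hc.mul) h)
          = (ldM.act h) ∘ₗ TensorProduct.lift ldM.act := by
        ext g m
        simp [ldM.act_mul]
      exact LinearMap.congr_fun hs x
    · intro x
      have hs : ldM.coact ∘ₗ TensorProduct.lift ldM.act
          = (TensorProduct.lift ldM.act).rTensor H ∘ₗ ldHM.coact := by
        ext g m
        have h4 := LinearMap.congr_fun (phi_e4 (TensorProduct.lift ldM.act) g) (ldM.coact m)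
        have h5 : (TensorProduct.lift ldM.act) ∘ₗ (TensorProduct.mk k H M) g = ldM.act g := by
          ext m'; simp
        simp only [AlgebraTensorModule.curry_apply, TensorProduct.curry_apply,
          LinearMap.coe_restrictScalars, LinearMap.comp_apply, LinearEquiv.coe_coe,
          TensorProduct.lift.tmul] at h4 ⊢
        rw [ldM.compat g m, l1M, h4, h5]
      exact LinearMap.congr_fun hs x
  · -- `f ↦ f ∘ η` preserves morphisms
    rintro f ⟨hf1, hf2⟩ n
    show ldM.coact (f (hc.one ⊗ₜ[k] n)) = _
    rw [hf2, l1]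
    exact LinearMap.congr_fun (phi_e4 f hc.one) (cm.coact n)
  · -- `g ↦ σ ∘ (id ⊗ g)` preserves morphisms
    intro g hg
    constructor
    · intro h x
      rw [hact]
      have hs : ((TensorProduct.lift ldM.act).comp (LinearMap.lTensor H g))
            ∘ₗ (((LinearMap.rTensorHom N).comp hc.mul) h)
          = (ldM.act h) ∘ₗ ((TensorProduct.lift ldM.act).comp (LinearMap.lTensor H g)) := by
        ext a n
        simp [ldM.act_mul]
      exact LinearMap.congr_fun hs x
    · intro x
      have hs : ldM.coact ∘ₗ ((TensorProduct.lift ldM.act).comp (LinearMap.lTensor H g))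
          = ((TensorProduct.lift ldM.act).comp (LinearMap.lTensor H g)).rTensor H
            ∘ₗ ldHN.coact := by
        ext a n
        set G := (TensorProduct.lift ldM.act).comp (LinearMap.lTensor H g) with hG
        have h4 := LinearMap.congr_fun (phi_e4 G a) (cm.coact n)
        have h5 : G ∘ₗ (TensorProduct.mk k H N) a = (ldM.act a) ∘ₗ g := by
          ext n'; simp [hG]
        simp only [AlgebraTensorModule.curry_apply, TensorProduct.curry_apply,
          LinearMap.coe_restrictScalars, LinearMap.comp_apply, LinearEquiv.coe_coe,
          hG, LinearMap.lTensor_tmul, TensorProduct.lift.tmul] at h4 ⊢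
        rw [ldM.compat a (g n), hg n, l1 a n, h4, h5]
        simp [LinearMap.rTensor_comp]
      exact LinearMap.congr_fun hs x
  · -- round trip on Long dimodule morphisms
    rintro f ⟨hf1, hf2⟩
    apply TensorProduct.ext'
    intro h n
    have h1 : ldHN.act h (hc.one ⊗ₜ[k] n) = h ⊗ₜ[k] n := by
      rw [hact]; simp [hc.mul_one]
    have h2 := hf1 h (hc.one ⊗ₜ[k] n)
    rw [h1] at h2
    simp only [LinearMap.comp_apply, LinearMap.lTensor_tmul, TensorProduct.lift.tmul,
      TensorProduct.mk_apply]
    rw [← h2]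
  · -- round trip on quasicomodule morphisms
    intro g hg
    apply LinearMap.ext
    intro n
    simp [ldM.act_one]
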